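/- arXiv:1811.01128 — 2 statements merged into one kernel-verified Lean document; each statement's English description precedes it below -/
import Mathlib

section
/- Let H be a Hilbert space, {e^{tA}}_{t≥0} a strongly continuous semigroup on H satisfying ‖e^{tA}‖ ≤ c₁ e^{−α t} for constants c₁ ≥ 1, α > 0. Suppose V : [0, ∞) → H is continuous and satisfies the Duhamel formula V(t) = e^{tA} V₀ + ∫₀^t e^{(t−τ)A} F(τ) dτ where ‖F(τ)‖ ≤ c ‖V(τ)‖² M for constants c, M > 0. If moreover ‖V(τ)‖ ≤ δ for all τ ≤ T with c₁ c M δ/α < 1/2, then sup_{0≤t≤T} e^{α t/2}‖V(t)‖ is bounded by a constant depending only on c₁, c, M, α, δ and ‖V₀‖ (not on T). -/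
/-!
Let `N` be the supremum of `φ t = exp (α t / 2) ‖V t‖` over `[0, T]`; it is finite because `‖V‖ ≤ δ`.
On `[0, T]` the smallness `‖V‖ ≤ δ` turns the quadratic forcing into one that is linear in `N` and
decays at rate `α / 2`, half the decay rate of the semigroup, so the Duhamel integral is bounded by
`(2 c₁ c M δ / α) N exp (-α t / 2)`. Hence `N ≤ c₁ ‖V₀‖ + k N` with `k = 2 c₁ c M δ / α < 1`, that is
`N ≤ c₁ ‖V₀‖ / (1 - k)`, a bound independent of `T`.
-/

open MeasureTheory Real Set

theorem integral_exp_mul {k : ℝ} (hk : k ≠ 0) (a b : ℝ) :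
    ∫ x in a..b, exp (k * x) = (exp (k * b) - exp (k * a)) / k := by
  rw [intervalIntegral.integral_comp_mul_left exp hk, integral_exp, smul_eq_mul, inv_mul_eq_div]

theorem le_div_one_sub_of_forall_le_add_mul {ι : Type*} {s : Set ι} {φ : ι → ℝ} {a k : ℝ}
    (hbdd : BddAbove (φ '' s)) (hk : k < 1)
    (h : ∀ N, (∀ y ∈ s, φ y ≤ N) → ∀ x ∈ s, φ x ≤ a + k * N) :
    ∀ x ∈ s, φ x ≤ a / (1 - k) := by
  intro x hx
  set N := sSup (φ '' s)
  have hle : ∀ y ∈ s, φ y ≤ N := fun y hy => le_csSup hbdd (mem_image_of_mem φ hy)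
  have hN : N ≤ a + k * N := csSup_le ⟨φ x, mem_image_of_mem φ hx⟩ (forall_mem_image.2 (h N hle))
  rw [le_div_iff₀ (sub_pos.2 hk)]
  nlinarith [mul_le_mul_of_nonneg_right (hle x hx) (sub_pos.2 hk).le]

section Duhamel

variable {E G : Type*} [NormedAddCommGroup E] [NormedSpace ℝ E]
  [NormedAddCommGroup G] [NormedSpace ℝ G]

theorem norm_duhamel_integral_le {S : ℝ → E →L[ℝ] G} {F : ℝ → E} {C K α β s : ℝ}
    (hS : ∀ t, 0 ≤ t → ‖S t‖ ≤ C * exp (-α * t))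
    (hF : ∀ τ ∈ Icc 0 s, ‖F τ‖ ≤ K * exp (-β * τ))
    (hCK : 0 ≤ C * K) (hβα : β < α) (hs : 0 ≤ s) :
    ‖∫ τ in 0..s, S (s - τ) (F τ)‖ ≤ C * K / (α - β) * exp (-β * s) := by
  have hγ : 0 < α - β := sub_pos.2 hβα
  have hbound : ∀ τ ∈ Ioc 0 s,
      ‖S (s - τ) (F τ)‖ ≤ C * K * exp (-α * s) * exp ((α - β) * τ) := by
    rintro τ ⟨hτ0, hτs⟩
    have hSτ := hS (s - τ) (sub_nonneg.2 hτs)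
    calc ‖S (s - τ) (F τ)‖ ≤ ‖S (s - τ)‖ * ‖F τ‖ := (S (s - τ)).le_opNorm _
      _ ≤ C * exp (-α * (s - τ)) * (K * exp (-β * τ)) :=
        mul_le_mul hSτ (hF τ ⟨hτ0.le, hτs⟩) (norm_nonneg _) ((norm_nonneg _).trans hSτ)
      _ = C * K * exp (-α * s) * exp ((α - β) * τ) := by
        have : exp (-α * (s - τ)) * exp (-β * τ) = exp (-α * s) * exp ((α - β) * τ) := by
          rw [← exp_add, ← exp_add]; ring_nf
        linear_combination (C * K) * this
  have hexp : exp (-α * s) * exp ((α - β) * s) = exp (-β * s) := by rw [← exp_add]; ring_nf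
  calc ‖∫ τ in 0..s, S (s - τ) (F τ)‖
      ≤ ∫ τ in 0..s, C * K * exp (-α * s) * exp ((α - β) * τ) :=
        intervalIntegral.norm_integral_le_of_norm_le hs (ae_of_all _ hbound)
          (Continuous.intervalIntegrable (by fun_prop) 0 s)
    _ = C * K / (α - β) * (exp (-β * s) - exp (-α * s)) := by
        rw [intervalIntegral.integral_const_mul, integral_exp_mul hγ.ne', mul_zero, exp_zero, ← hexp]
        field_simp
    _ ≤ C * K / (α - β) * exp (-β * s) := by
        gcongr
        linarith [exp_pos (-α * s)]

end Duhamel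

theorem exp_mul_norm_le_of_duhamel {H : Type*} [NormedAddCommGroup H] [NormedSpace ℝ H]
    {S : ℝ → H →L[ℝ] H} {V F : ℝ → H} {V₀ : H} {c₁ c M α δ T N : ℝ}
    (hc₁ : 0 ≤ c₁) (hc : 0 ≤ c) (hM : 0 ≤ M) (hα : 0 < α) (hδ : 0 ≤ δ)
    (hS : ∀ t, 0 ≤ t → ‖S t‖ ≤ c₁ * exp (-α * t))
    (hDuhamel : ∀ t ∈ Icc 0 T, V t = S t V₀ + ∫ τ in 0..t, S (t - τ) (F τ))
    (hF : ∀ τ ∈ Icc 0 T, ‖F τ‖ ≤ c * ‖V τ‖ ^ 2 * M)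
    (hV : ∀ τ ∈ Icc 0 T, ‖V τ‖ ≤ δ)
    (hN : ∀ τ ∈ Icc 0 T, exp (α * τ / 2) * ‖V τ‖ ≤ N) :
    ∀ t ∈ Icc 0 T, exp (α * t / 2) * ‖V t‖ ≤ c₁ * ‖V₀‖ + 2 * (c₁ * c * M * δ / α) * N := by
  rintro t ⟨ht0, htT⟩
  have hN0 : 0 ≤ N := (by positivity : 0 ≤ exp (α * t / 2) * ‖V t‖).trans (hN t ⟨ht0, htT⟩)
  have hforcing : ∀ τ ∈ Icc 0 t, ‖F τ‖ ≤ c * M * δ * N * exp (-(α / 2) * τ) := by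
    intro τ hτ
    have hτT : τ ∈ Icc 0 T := ⟨hτ.1, hτ.2.trans htT⟩
    have hVτ : ‖V τ‖ ≤ N * exp (-(α / 2) * τ) :=
      calc ‖V τ‖ = exp (α * τ / 2) * ‖V τ‖ * exp (-(α / 2) * τ) := by
            rw [mul_right_comm, ← exp_add]; ring_nf; rw [exp_zero, one_mul]
        _ ≤ N * exp (-(α / 2) * τ) := by gcongr; exact hN τ hτT
    calc ‖F τ‖ ≤ c * ‖V τ‖ ^ 2 * M := hF τ hτT
      _ = c * M * (‖V τ‖ * ‖V τ‖) := by ring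
      _ ≤ c * M * (δ * (N * exp (-(α / 2) * τ))) := 
          mul_le_mul_of_nonneg_left (mul_le_mul (hV τ hτT) hVτ (norm_nonneg _) hδ) (by positivity)
      _ = c * M * δ * N * exp (-(α / 2) * τ) := by ring
  have hintegral := norm_duhamel_integral_le hS hforcing (by positivity) (by linarith) ht0
  have hlinear : ‖S t V₀‖ ≤ c₁ * exp (-α * t) * ‖V₀‖ := (S t).le_of_opNorm_le (hS t ht0) V₀
  have h₁ : exp (α * t / 2) * exp (-α * t) = exp (-(α / 2) * t) := by rw [← exp_add]; ring_nf
  have h₂ : exp (α * t / 2) * exp (-(α / 2) * t) = 1 := by rw [← exp_add]; ring_nf; exact exp_zero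
  calc exp (α * t / 2) * ‖V t‖
      ≤ exp (α * t / 2) * (c₁ * exp (-α * t) * ‖V₀‖
          + c₁ * (c * M * δ * N) / (α - α / 2) * exp (-(α / 2) * t)) := by
        rw [hDuhamel t ⟨ht0, htT⟩]
        gcongr
        exact (norm_add_le _ _).trans (add_le_add hlinear hintegral)
    _ = c₁ * ‖V₀‖ * exp (-(α / 2) * t) + 2 * (c₁ * c * M * δ / α) * N := by
        rw [show α - α / 2 = α / 2 by ring]
        linear_combination (c₁ * ‖V₀‖) * h₁ + (2 * c₁ * c * M * δ * N / α) * h₂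
    _ ≤ c₁ * ‖V₀‖ + 2 * (c₁ * c * M * δ / α) * N := by
        gcongr ?_ + _
        exact mul_le_of_le_one_right (by positivity) (exp_le_one_iff.2 (by nlinarith))

theorem abstract_bootstrap_estimate_general
    (H : Type*) [NormedAddCommGroup H] [InnerProductSpace ℝ H]
    (c₁ c M α δ : ℝ) (hc₁ : 1 ≤ c₁) (hc : 0 < c) (hM : 0 < M) (hα : 0 < α) (hδ : 0 < δ)
    (V₀ : H) :
    ∃ B : ℝ, ∀ (T : ℝ), 0 ≤ T → ∀ (S : ℝ → H →L[ℝ] H) (V : ℝ → H) (F : ℝ → H),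
      (S 0 = ContinuousLinearMap.id ℝ H) →
      (∀ s t : ℝ, 0 ≤ s → 0 ≤ t → S (s + t) = (S s).comp (S t)) →
      (Continuous fun t : ℝ => S t V₀) →
      (∀ t : ℝ, 0 ≤ t → ‖S t‖ ≤ c₁ * Real.exp (-α * t)) →
      Continuous V →
      (∀ t ∈ Set.Icc (0:ℝ) T, V t = S t V₀ + ∫ τ in (0:ℝ)..t, S (t - τ) (F τ)) →
      (∀ τ ∈ Set.Icc (0:ℝ) T, ‖F τ‖ ≤ c * ‖V τ‖ ^ 2 * M) →
      (∀ τ ∈ Set.Icc (0:ℝ) T, ‖V τ‖ ≤ δ) →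
      c₁ * c * M * δ / α < 1 / 2 →
      ∀ t ∈ Set.Icc (0:ℝ) T, Real.exp (α * t / 2) * ‖V t‖ ≤ B := by
  refine ⟨c₁ * ‖V₀‖ / (1 - 2 * (c₁ * c * M * δ / α)), ?_⟩
  intro T _ S V F _ _ _ hS _ hDuhamel hF hV hsmall
  have hbdd : BddAbove ((fun t => exp (α * t / 2) * ‖V t‖) '' Icc 0 T) :=
    ⟨exp (α * T / 2) * δ, forall_mem_image.2 fun τ hτ => by
      gcongr
      exacts [hτ.2, hV τ hτ]⟩
  exact le_div_one_sub_of_forall_le_add_mul hbdd (by linarith) fun N hN =>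
    exp_mul_norm_le_of_duhamel (by linarith) hc.le hM.le hα hδ.le hS hDuhamel hF hV hN

theorem abstract_bootstrap_estimate
    (H : Type*) [NormedAddCommGroup H] [InnerProductSpace ℝ H] [CompleteSpace H]
    (c₁ c M α δ : ℝ) (hc₁ : 1 ≤ c₁) (hc : 0 < c) (hM : 0 < M) (hα : 0 < α) (hδ : 0 < δ)
    (V₀ : H) :
    ∃ B : ℝ, ∀ (T : ℝ), 0 ≤ T → ∀ (S : ℝ → H →L[ℝ] H) (V : ℝ → H) (F : ℝ → H),
      (S 0 = ContinuousLinearMap.id ℝ H) →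
      (∀ s t : ℝ, 0 ≤ s → 0 ≤ t → S (s + t) = (S s).comp (S t)) →
      (Continuous fun t : ℝ => S t V₀) →
      (∀ t : ℝ, 0 ≤ t → ‖S t‖ ≤ c₁ * Real.exp (-α * t)) →
      Continuous V →
      (∀ t ∈ Set.Icc (0:ℝ) T, V t = S t V₀ + ∫ τ in (0:ℝ)..t, S (t - τ) (F τ)) →
      (∀ τ ∈ Set.Icc (0:ℝ) T, ‖F τ‖ ≤ c * ‖V τ‖ ^ 2 * M) →
      (∀ τ ∈ Set.Icc (0:ℝ) T, ‖V τ‖ ≤ δ) →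
      c₁ * c * M * δ / α < 1 / 2 →
      ∀ t ∈ Set.Icc (0:ℝ) T, Real.exp (α * t / 2) * ‖V t‖ ≤ B :=
  abstract_bootstrap_estimate_general H c₁ c M α δ hc₁ hc hM hα hδ V₀
end

section
/- Let L > 0, ρ₁, μ, k > 0, and let (φ, ψ) be smooth functions on [0, T] × [0, L] with φ(t,0) = φ(t,L) = ψ(t,0) = ψ(t,L) = 0 satisfying ρ₁φ_tt = k(φ_x + ψ)_x − μφ_t. Define I₂(t) = ρ₁∫₀^L φ_t φ dx. Then for every ε > 0, with c = L²/π²: dI₂/dt ≤ −(k − (ε c/2)(k + μ)) ∫₀^L φ_x² dx + (k/(2ε)) ∫₀^L ψ_x² dx + (μ/(2ε) + ρ₁) ∫₀^L φ_t² dx. -/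
/-- Partial derivative with respect to time. -/
noncomputable def pdt (f : ℝ → ℝ → ℝ) (t x : ℝ) : ℝ := deriv (fun s => f s x) t

/-- Partial derivative with respect to space. -/
noncomputable def pdx (f : ℝ → ℝ → ℝ) (t x : ℝ) : ℝ := deriv (fun y => f t y) x

section helpers
variable {f : ℝ → ℝ → ℝ}

lemma hasDerivAt_pdt (hf : ContDiff ℝ (⊤ : ℕ∞) ↿f) (t x : ℝ) :
    HasDerivAt (fun s => f s x) (pdt f t x) t := by
  have h := (((hf.differentiable (by simp)) (t, x)).comp t
      (differentiableAt_id.prodMk (differentiableAt_const x))).hasDerivAt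
  exact h

lemma hasDerivAt_pdx (hf : ContDiff ℝ (⊤ : ℕ∞) ↿f) (t x : ℝ) :
    HasDerivAt (fun y => f t y) (pdx f t x) x := by
  have h := (((hf.differentiable (by simp)) (t, x)).comp x
      ((differentiableAt_const t).prodMk differentiableAt_id)).hasDerivAt
  exact h

lemma contDiff_pdt (hf : ContDiff ℝ (⊤ : ℕ∞) ↿f) : ContDiff ℝ (⊤ : ℕ∞) ↿(pdt f) := by
  have : ↿(pdt f) = fun p : ℝ × ℝ => fderiv ℝ ↿f p (1, 0) := by
    funext p
    have hc : HasDerivAt (fun s : ℝ => (s, p.2)) ((1 : ℝ), (0 : ℝ)) p.1 :=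
      (hasDerivAt_id p.1).prodMk (hasDerivAt_const p.1 p.2)
    have h2 : HasDerivAt (fun s => f s p.2) (fderiv ℝ ↿f (p.1, p.2) (1, 0)) p.1 := by
      have h := ((hf.differentiable (by simp)) (p.1, p.2)).hasFDerivAt.comp_hasDerivAt p.1 hc
      exact h
    exact h2.deriv
  rw [this]
  exact (hf.fderiv_right (by simp)).clm_apply contDiff_const

lemma contDiff_pdx (hf : ContDiff ℝ (⊤ : ℕ∞) ↿f) : ContDiff ℝ (⊤ : ℕ∞) ↿(pdx f) := by
  have : ↿(pdx f) = fun p : ℝ × ℝ => fderiv ℝ ↿f p (0, 1) := by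
    funext p
    have hc : HasDerivAt (fun y : ℝ => (p.1, y)) ((0 : ℝ), (1 : ℝ)) p.2 :=
      (hasDerivAt_const p.2 p.1).prodMk (hasDerivAt_id p.2)
    have h2 : HasDerivAt (fun y => f p.1 y) (fderiv ℝ ↿f (p.1, p.2) (0, 1)) p.2 := by
      have h := ((hf.differentiable (by simp)) (p.1, p.2)).hasFDerivAt.comp_hasDerivAt p.2 hc
      exact h
    exact h2.deriv
  rw [this]
  exact (hf.fderiv_right (by simp)).clm_apply contDiff_const

lemma continuous_section (hf : ContDiff ℝ (⊤ : ℕ∞) ↿f) (t : ℝ) : Continuous (f t) :=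
  hf.continuous.comp (Continuous.prodMk_right t)

lemma continuous_section' (hf : ContDiff ℝ (⊤ : ℕ∞) ↿f) (x : ℝ) : Continuous (fun s => f s x) :=
  hf.continuous.comp (continuous_id.prodMk continuous_const)

/-- Differentiation under the interval integral for smooth integrands. -/
lemma hasDerivAt_intervalIntegral (hf : ContDiff ℝ (⊤ : ℕ∞) ↿f) (a b t : ℝ) :
    HasDerivAt (fun s => ∫ x in a..b, f s x)
      (∫ x in a..b, pdt f t x) t := by
  have hK : IsCompact (Metric.closedBall t 1 ×ˢ Set.uIcc a b) :=
    (isCompact_closedBall t 1).prod isCompact_uIcc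
  obtain ⟨C, hC⟩ := hK.exists_bound_of_continuousOn (contDiff_pdt hf).continuous.continuousOn
  have main := intervalIntegral.hasDerivAt_integral_of_dominated_loc_of_deriv_le
    (F := fun s x => f s x) (F' := fun s x => pdt f s x) (x₀ := t)
    (a := a) (b := b) (μ := MeasureTheory.volume) (bound := fun _ => C)
    (s := Metric.ball t 1) (Metric.ball_mem_nhds t one_pos)
    (Filter.Eventually.of_forall fun s =>
      (continuous_section hf s).aestronglyMeasurable)
    ((continuous_section hf t).intervalIntegrable a b)
    ((continuous_section (contDiff_pdt hf) t).aestronglyMeasurable)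
    (Filter.Eventually.of_forall fun x hx => fun s hs => by
      have : ((s, x) : ℝ × ℝ) ∈ Metric.closedBall t 1 ×ˢ Set.uIcc a b :=
        ⟨Metric.ball_subset_closedBall hs, Set.uIoc_subset_uIcc hx⟩
      exact hC (s, x) this)
    (intervalIntegrable_const)
    (Filter.Eventually.of_forall fun x hx => fun s hs => hasDerivAt_pdt hf s x)
  exact main.2

/-- Integrated Young inequality for continuous functions. -/
lemma young_int {a b d : ℝ} (hab : a ≤ b) (hd : 0 < d) {p q : ℝ → ℝ}
    (hp : Continuous p) (hq : Continuous q) :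
    ∫ x in a..b, p x * q x ≤
      d / 2 * (∫ x in a..b, (p x) ^ 2) + 1 / (2 * d) * ∫ x in a..b, (q x) ^ 2 := by
  have hpt : ∀ x, p x * q x ≤ d / 2 * p x ^ 2 + 1 / (2 * d) * q x ^ 2 := by
    intro x
    rw [← sub_nonneg]
    have hh : d / 2 * p x ^ 2 + 1 / (2 * d) * q x ^ 2 - p x * q x
        = (d * p x - q x) ^ 2 / (2 * d) := by
      field_simp; ring
    rw [hh]; positivity
  have h1 : ∫ x in a..b, p x * q x ≤
      ∫ x in a..b, (d / 2 * p x ^ 2 + 1 / (2 * d) * q x ^ 2) := by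
    apply intervalIntegral.integral_mono_on hab ((hp.mul hq).intervalIntegrable a b)
      (((continuous_const.mul (hp.pow 2)).add (continuous_const.mul (hq.pow 2))).intervalIntegrable a b)
    exact fun x _ => hpt x
  have h2 : ∫ x in a..b, (d / 2 * p x ^ 2 + 1 / (2 * d) * q x ^ 2)
      = d / 2 * (∫ x in a..b, (p x) ^ 2) + 1 / (2 * d) * ∫ x in a..b, (q x) ^ 2 := by
    rw [intervalIntegral.integral_add (f := fun x => d / 2 * p x ^ 2) (g := fun x => 1 / (2 * d) * q x ^ 2) ((continuous_const.mul (hp.pow 2)).intervalIntegrable a b)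
      ((continuous_const.mul (hq.pow 2)).intervalIntegrable a b),
      intervalIntegral.integral_const_mul, intervalIntegral.integral_const_mul]
  linarith
end helpers

set_option maxHeartbeats 1000000 in
lemma poincare_sharp {L : ℝ} (hL : 0 < L) {f f' : ℝ → ℝ}
    (hd : ∀ x, HasDerivAt f (f' x) x) (hf' : Continuous f')
    (h0 : f 0 = 0) (hL0 : f L = 0) :
    ∫ x in (0:ℝ)..L, f x ^ 2 ≤ L ^ 2 / Real.pi ^ 2 * ∫ x in (0:ℝ)..L, f' x ^ 2 := by
  have hf : Continuous f := by
    rw [continuous_iff_continuousAt]; exact fun x => (hd x).continuousAt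
  set a : ℝ := Real.pi / L with ha_def
  have hπ := Real.pi_pos
  have ha : 0 < a := div_pos hπ hL
  have haL : a * L = Real.pi := div_mul_cancel₀ _ (ne_of_gt hL)
  -- bounds on f and f'
  obtain ⟨M₀, hM₀⟩ := (isCompact_Icc (a := (0:ℝ)) (b := L)).exists_bound_of_continuousOn
    hf.continuousOn
  obtain ⟨M₁', hM₁'⟩ := (isCompact_Icc (a := (0:ℝ)) (b := L)).exists_bound_of_continuousOn
    hf'.continuousOn
  set M := max M₀ 0 with hM_def
  set M' := max M₁' 0 with hM'_def
  have hM : ∀ x ∈ Set.Icc (0:ℝ) L, |f x| ≤ M := fun x hx =>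
    le_trans (hM₀ x hx) (le_max_left _ _)
  have hM' : ∀ x ∈ Set.Icc (0:ℝ) L, |f' x| ≤ M' := fun x hx =>
    le_trans (hM₁' x hx) (le_max_left _ _)
  have hMnn : 0 ≤ M := le_max_right _ _
  have hM'nn : 0 ≤ M' := le_max_right _ _
  -- Lipschitz-type bound from MVT
  have hlip : ∀ x ∈ Set.Icc (0:ℝ) L, ∀ y ∈ Set.Icc (0:ℝ) L, |f y - f x| ≤ M' * |y - x| := by
    intro x hx y hy
    have := (convex_Icc (0:ℝ) L).norm_image_sub_le_of_norm_hasDerivWithin_le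
      (f := f) (f' := f') (fun z hz => (hd z).hasDerivWithinAt) (fun z hz => hM' z hz) hx hy
    simpa [Real.norm_eq_abs] using this
  -- integrability facts
  have hint2 : ∀ u v : ℝ, IntervalIntegrable (fun x => f x ^ 2) MeasureTheory.volume u v :=
    fun u v => ((hf.pow 2).intervalIntegrable u v)
  have hint2' : ∀ u v : ℝ, IntervalIntegrable (fun x => f' x ^ 2) MeasureTheory.volume u v :=
    fun u v => ((hf'.pow 2).intervalIntegrable u v)
  -- key estimate for small δ
  set A := ∫ x in (0:ℝ)..L, f' x ^ 2 with hA
  set B := ∫ x in (0:ℝ)..L, f x ^ 2 with hB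
  have key : ∀ δ : ℝ, 0 < δ → δ < L / 2 → a * δ ≤ 1 →
      -( (8/3) * M' ^ 2 * δ + 2 * a ^ 2 * M ^ 2 * δ) ≤ A - a ^ 2 * B := by
    intro δ hδ hδL haδ
    have hδL' : δ ≤ L - δ := by linarith
    have hδle : δ ≤ L := by linarith
    -- sin (a x) > 0 on [δ, L - δ]
    have hsin : ∀ x ∈ Set.Icc δ (L - δ), 0 < Real.sin (a * x) := by
      intro x hx
      apply Real.sin_pos_of_pos_of_lt_pi
      · exact mul_pos ha (lt_of_lt_of_le hδ hx.1)
      · rw [← haL]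
        have : x < L := lt_of_le_of_lt hx.2 (by linarith)
        exact (mul_lt_mul_iff_right₀ ha).2 this
    set c : ℝ → ℝ := fun x => Real.cos (a * x) / Real.sin (a * x) with hc_def
    set G : ℝ → ℝ := fun x => a * f x ^ 2 * c x with hG_def
    set g : ℝ → ℝ := fun x => f' x - a * f x * c x with hg_def
    -- derivative of G
    have hG : ∀ x ∈ Set.Icc δ (L - δ),
        HasDerivAt G (f' x ^ 2 - a ^ 2 * f x ^ 2 - g x ^ 2) x := by
      intro x hx
      have hs := hsin x hx
      have hsne : Real.sin (a * x) ≠ 0 := ne_of_gt hs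
      have hax : HasDerivAt (fun y : ℝ => a * y) a x := by
        simpa using (hasDerivAt_id x).const_mul a
      have hcos : HasDerivAt (fun y => Real.cos (a * y)) (-Real.sin (a * x) * a) x :=
        (Real.hasDerivAt_cos (a * x)).comp x hax
      have hsinD : HasDerivAt (fun y => Real.sin (a * y)) (Real.cos (a * x) * a) x :=
        (Real.hasDerivAt_sin (a * x)).comp x hax
      have hcD : HasDerivAt c ((-Real.sin (a*x) * a * Real.sin (a*x) -
          Real.cos (a*x) * (Real.cos (a*x) * a)) / Real.sin (a*x) ^ 2) x :=
        hcos.div hsinD hsne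
      have hf2 : HasDerivAt (fun y => f y ^ 2) (2 * f x * f' x) x := by
        have h := (hd x).mul (hd x)
        simp only [pow_two]
        exact h.congr_deriv (by ring)
      have := ((hf2.const_mul a).mul hcD)
      have heval : a * (2 * f x * f' x) * c x + a * f x ^ 2 *
          ((-Real.sin (a*x) * a * Real.sin (a*x) -
            Real.cos (a*x) * (Real.cos (a*x) * a)) / Real.sin (a*x) ^ 2)
          = f' x ^ 2 - a ^ 2 * f x ^ 2 - g x ^ 2 := by
        simp only [hg_def, hc_def]
        field_simp
        ring_nf
      rw [heval] at this
      exact this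
    -- continuity on the inner interval
    have ccont : ContinuousOn c (Set.Icc δ (L - δ)) := by
      apply ContinuousOn.div
      · exact (Real.continuous_cos.comp (continuous_const.mul continuous_id)).continuousOn
      · exact (Real.continuous_sin.comp (continuous_const.mul continuous_id)).continuousOn
      · exact fun x hx => ne_of_gt (hsin x hx)
    have gcont : ContinuousOn g (Set.Icc δ (L - δ)) := by
      apply ContinuousOn.sub hf'.continuousOn
      exact ((continuous_const.mul hf).continuousOn.mul ccont)
    have g2int : IntervalIntegrable (fun x => g x ^ 2) MeasureTheory.volume δ (L - δ) := by
      apply ContinuousOn.intervalIntegrable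
      rw [Set.uIcc_of_le hδL']
      exact gcont.pow 2
    have Dcont : IntervalIntegrable (fun x => f' x ^ 2 - a ^ 2 * f x ^ 2 - g x ^ 2)
        MeasureTheory.volume δ (L - δ) :=
      ((hint2' δ (L-δ)).sub ((hint2 δ (L-δ)).const_mul (a^2))).sub g2int
    have hftc : ∫ x in δ..(L - δ), (f' x ^ 2 - a ^ 2 * f x ^ 2 - g x ^ 2) = G (L - δ) - G δ := by
      apply intervalIntegral.integral_eq_sub_of_hasDerivAt
      · intro x hx
        rw [Set.uIcc_of_le hδL'] at hx
        exact hG x hx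
      · exact Dcont
    have hsplit : ∫ x in δ..(L - δ), (f' x ^ 2 - a ^ 2 * f x ^ 2 - g x ^ 2)
        = (∫ x in δ..(L - δ), f' x ^ 2) - a ^ 2 * (∫ x in δ..(L - δ), f x ^ 2)
          - ∫ x in δ..(L - δ), g x ^ 2 := by
      rw [intervalIntegral.integral_sub ((hint2' δ (L-δ)).sub ((hint2 δ (L-δ)).const_mul (a^2)))
        g2int, intervalIntegral.integral_sub (hint2' δ (L-δ)) ((hint2 δ (L-δ)).const_mul (a^2)),
        intervalIntegral.integral_const_mul]
    have hg2nn : 0 ≤ ∫ x in δ..(L - δ), g x ^ 2 :=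
      intervalIntegral.integral_nonneg hδL' (fun x _ => sq_nonneg _)
    set A1 := ∫ x in δ..(L - δ), f' x ^ 2 with hA1
    set B1 := ∫ x in δ..(L - δ), f x ^ 2 with hB1
    have hmain : G (L - δ) - G δ ≤ A1 - a ^ 2 * B1 := by
      rw [hsplit] at hftc; linarith
    -- bounds on the boundary terms
    have hs0 : 0 < Real.sin (a * δ) := by
      apply Real.sin_pos_of_pos_of_lt_pi (mul_pos ha hδ)
      calc a * δ ≤ 1 := haδ
        _ < Real.pi := by linarith [Real.pi_gt_three]
    have hs34 : 3 / 4 * (a * δ) ≤ Real.sin (a * δ) := by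
      have h1 := Real.sin_gt_sub_cube (mul_pos ha hδ)
      nlinarith [mul_pos ha hδ, sq_nonneg (a * δ)]
    have hfδ : |f δ| ≤ M' * δ := by
      have := hlip 0 ⟨le_refl 0, hL.le⟩ δ ⟨hδ.le, hδle⟩
      simpa [h0, abs_of_pos hδ] using this
    have hfLδ : |f (L - δ)| ≤ M' * δ := by
      have := hlip L ⟨hL.le, le_refl L⟩ (L - δ) ⟨by linarith, by linarith⟩
      have h2 : |L - δ - L| = δ := by rw [show L - δ - L = -δ by ring, abs_neg, abs_of_pos hδ]
      simpa [hL0, h2, abs_of_pos hδ] using this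
    have hfδsq : f δ ^ 2 ≤ (M' * δ) ^ 2 := by
      rw [← sq_abs]; exact pow_le_pow_left₀ (abs_nonneg _) hfδ 2
    have hfLδsq : f (L - δ) ^ 2 ≤ (M' * δ) ^ 2 := by
      rw [← sq_abs]; exact pow_le_pow_left₀ (abs_nonneg _) hfLδ 2
    have hGδ : G δ ≤ 4 / 3 * M' ^ 2 * δ := by
      have hGeq : G δ = a * f δ ^ 2 * Real.cos (a * δ) / Real.sin (a * δ) := by
        simp only [hG_def, hc_def]; ring
      rw [hGeq, div_le_iff₀ hs0]
      have h1 : a * f δ ^ 2 * Real.cos (a * δ) ≤ a * f δ ^ 2 := by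
        have := mul_le_mul_of_nonneg_left (Real.cos_le_one (a * δ))
          (mul_nonneg ha.le (sq_nonneg (f δ)))
        linarith [this]
      have h2 : a * f δ ^ 2 ≤ a * (M' * δ) ^ 2 :=
        mul_le_mul_of_nonneg_left hfδsq ha.le
      have h3 : a * (M' * δ) ^ 2 = 4 / 3 * M' ^ 2 * δ * (3 / 4 * (a * δ)) := by ring
      have h4 : 4 / 3 * M' ^ 2 * δ * (3 / 4 * (a * δ)) ≤
          4 / 3 * M' ^ 2 * δ * Real.sin (a * δ) := by
        have hnn : (0:ℝ) ≤ 4 / 3 * M' ^ 2 * δ := by positivity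
        exact mul_le_mul_of_nonneg_left hs34 hnn
      linarith
    have hsinLδ : Real.sin (a * (L - δ)) = Real.sin (a * δ) := by
      rw [show a * (L - δ) = Real.pi - a * δ by rw [← haL]; ring, Real.sin_pi_sub]
    have hGLδ : -(4 / 3 * M' ^ 2 * δ) ≤ G (L - δ) := by
      have hGeq : G (L - δ) = a * f (L - δ) ^ 2 * Real.cos (a * (L - δ)) / Real.sin (a * δ) := by
        simp only [hG_def, hc_def, hsinLδ]; ring
      rw [hGeq, le_div_iff₀ hs0]
      have h1 : -(a * f (L - δ) ^ 2) ≤ a * f (L - δ) ^ 2 * Real.cos (a * (L - δ)) := by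
        have := mul_le_mul_of_nonneg_left (Real.neg_one_le_cos (a * (L - δ)))
          (mul_nonneg ha.le (sq_nonneg (f (L - δ))))
        linarith [this]
      have h2 : a * f (L - δ) ^ 2 ≤ a * (M' * δ) ^ 2 :=
        mul_le_mul_of_nonneg_left hfLδsq ha.le
      have h3 : a * (M' * δ) ^ 2 = 4 / 3 * M' ^ 2 * δ * (3 / 4 * (a * δ)) := by ring
      have h4 : 4 / 3 * M' ^ 2 * δ * (3 / 4 * (a * δ)) ≤
          4 / 3 * M' ^ 2 * δ * Real.sin (a * δ) := by
        have hnn : (0:ℝ) ≤ 4 / 3 * M' ^ 2 * δ := by positivity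
        exact mul_le_mul_of_nonneg_left hs34 hnn
      linarith
    -- comparison of integrals over [0, L] and [δ, L - δ]
    have sqb : ∀ x ∈ Set.Icc (0:ℝ) L, f x ^ 2 ≤ M ^ 2 := by
      intro x hx
      rw [← sq_abs]; exact pow_le_pow_left₀ (abs_nonneg _) (hM x hx) 2
    have hsplitA : A = (∫ x in (0:ℝ)..δ, f' x ^ 2) + A1 + ∫ x in (L - δ)..L, f' x ^ 2 := by
      rw [hA, hA1, intervalIntegral.integral_add_adjacent_intervals (hint2' 0 δ) (hint2' δ (L-δ)),
        intervalIntegral.integral_add_adjacent_intervals (hint2' 0 (L-δ)) (hint2' (L-δ) L)]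
    have hsplitB : B = (∫ x in (0:ℝ)..δ, f x ^ 2) + B1 + ∫ x in (L - δ)..L, f x ^ 2 := by
      rw [hB, hB1, intervalIntegral.integral_add_adjacent_intervals (hint2 0 δ) (hint2 δ (L-δ)),
        intervalIntegral.integral_add_adjacent_intervals (hint2 0 (L-δ)) (hint2 (L-δ) L)]
    have htailA1 : 0 ≤ ∫ x in (0:ℝ)..δ, f' x ^ 2 :=
      intervalIntegral.integral_nonneg hδ.le (fun x _ => sq_nonneg _)
    have htailA2 : 0 ≤ ∫ x in (L - δ)..L, f' x ^ 2 :=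
      intervalIntegral.integral_nonneg (by linarith) (fun x _ => sq_nonneg _)
    have htailB1 : ∫ x in (0:ℝ)..δ, f x ^ 2 ≤ M ^ 2 * δ := by
      have h := intervalIntegral.integral_mono_on hδ.le (hint2 0 δ) intervalIntegrable_const
        (fun x hx => sqb x ⟨hx.1, le_trans hx.2 hδle⟩)
      simpa [mul_comm] using h
    have htailB2 : ∫ x in (L - δ)..L, f x ^ 2 ≤ M ^ 2 * δ := by
      have h := intervalIntegral.integral_mono_on (by linarith : L - δ ≤ L) (hint2 (L-δ) L)
        intervalIntegrable_const (fun x hx => sqb x ⟨by linarith [hx.1], hx.2⟩)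
      have h2 : ∫ _x in (L - δ)..L, (M^2 : ℝ) = M ^ 2 * δ := by
        rw [intervalIntegral.integral_const, smul_eq_mul]; ring
      rw [h2] at h; linarith
    linarith [hsplitA, hsplitB, htailA1, htailA2, hmain, hGδ, hGLδ,
      mul_le_mul_of_nonneg_left
        (show B - B1 ≤ 2 * (M ^ 2 * δ) by linarith) (sq_nonneg a)]
  -- pass to the limit δ → 0
  have hfinal : 0 ≤ A - a ^ 2 * B := by
    by_contra hcon
    push_neg at hcon
    set ε := a ^ 2 * B - A with hε
    have hεpos : 0 < ε := by simp only [hε]; linarith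
    have hDpos : (0:ℝ) < (8/3) * M' ^ 2 + 2 * a ^ 2 * M ^ 2 + 1 := by positivity
    set δ := min (L / 4) (min (1 / (2 * a))
      (ε / ((8/3) * M' ^ 2 + 2 * a ^ 2 * M ^ 2 + 1))) with hδdef
    have hδpos : 0 < δ := by
      apply lt_min (by linarith)
      exact lt_min (by positivity) (by positivity)
    have hδ1 : δ < L / 2 := lt_of_le_of_lt (min_le_left _ _) (by linarith)
    have hδ2 : a * δ ≤ 1 := by
      have h : δ ≤ 1 / (2 * a) := le_trans (min_le_right _ _) (min_le_left _ _)
      rw [le_div_iff₀ (by positivity)] at h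
      linarith
    have hδ3 : δ ≤ ε / ((8/3) * M' ^ 2 + 2 * a ^ 2 * M ^ 2 + 1) :=
      le_trans (min_le_right _ _) (min_le_right _ _)
    have h5 : δ * ((8/3) * M' ^ 2 + 2 * a ^ 2 * M ^ 2 + 1) ≤ ε := (le_div_iff₀ hDpos).mp hδ3
    have hk := key δ hδpos hδ1 hδ2
    have hεeq : A - a ^ 2 * B = -ε := by rw [hε]; ring
    rw [hεeq] at hk
    linarith [hk, h5, hδpos]
  have ha2 : a ^ 2 = Real.pi ^ 2 / L ^ 2 := by
    rw [ha_def]; field_simp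
  rw [ha2] at hfinal
  have h6 : Real.pi ^ 2 / L ^ 2 * B ≤ A := by linarith
  have h7 := mul_le_mul_of_nonneg_left h6
    (le_of_lt (div_pos (by positivity : (0:ℝ) < L ^ 2) (by positivity : (0:ℝ) < Real.pi ^ 2)))
  have h8 : L ^ 2 / Real.pi ^ 2 * (Real.pi ^ 2 / L ^ 2 * B) = B := by
    field_simp
  rw [h8] at h7
  exact h7

theorem I2_multiplier_estimate
    (L T ρ₁ μ k : ℝ) (hL : 0 < L) (hT : 0 < T) (hρ₁ : 0 < ρ₁) (hμ : 0 < μ) (hk : 0 < k)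
    (φ ψ : ℝ → ℝ → ℝ)
    (hφ : ContDiff ℝ (⊤ : ℕ∞) ↿φ) (hψ : ContDiff ℝ (⊤ : ℕ∞) ↿ψ)
    (hbc : ∀ t ∈ Set.Icc (0:ℝ) T,
      φ t 0 = 0 ∧ φ t L = 0 ∧ ψ t 0 = 0 ∧ ψ t L = 0)
    (heq : ∀ t ∈ Set.Icc (0:ℝ) T, ∀ x ∈ Set.Icc (0:ℝ) L,
      ρ₁ * pdt (pdt φ) t x = k * pdx (fun s y => pdx φ s y + ψ s y) t x - μ * pdt φ t x)
    (I₂ : ℝ → ℝ)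
    (hI₂ : ∀ t : ℝ, I₂ t = ρ₁ * ∫ x in (0:ℝ)..L, pdt φ t x * φ t x) :
    ∀ ε : ℝ, 0 < ε → ∀ t ∈ Set.Icc (0:ℝ) T,
      deriv I₂ t ≤
        -(k - (ε * (L ^ 2 / Real.pi ^ 2) / 2) * (k + μ)) * (∫ x in (0:ℝ)..L, (pdx φ t x) ^ 2)
        + (k / (2 * ε)) * (∫ x in (0:ℝ)..L, (pdx ψ t x) ^ 2)
        + (μ / (2 * ε) + ρ₁) * (∫ x in (0:ℝ)..L, (pdt φ t x) ^ 2) := by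
  intro ε hε t ht
  set c : ℝ := L ^ 2 / Real.pi ^ 2 with hc
  have hc0 : 0 < c := by rw [hc]; positivity
  obtain ⟨hb0, hbL, hp0, hpL⟩ := hbc t ht
  -- continuity of the various sections
  have hφt : Continuous (φ t) := continuous_section hφ t
  have hψt : Continuous (ψ t) := continuous_section hψ t
  have hφx : Continuous (fun x => pdx φ t x) := continuous_section (contDiff_pdx hφ) t
  have hψx : Continuous (fun x => pdx ψ t x) := continuous_section (contDiff_pdx hψ) t
  have hφtd : Continuous (fun x => pdt φ t x) := continuous_section (contDiff_pdt hφ) t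
  have hφtt : Continuous (fun x => pdt (pdt φ) t x) :=
    continuous_section (contDiff_pdt (contDiff_pdt hφ)) t
  set F : ℝ → ℝ → ℝ := fun s y => pdx φ s y + ψ s y with hF
  have hFsm : ContDiff ℝ (⊤ : ℕ∞) ↿F := by
    have h : ↿F = fun p : ℝ × ℝ => (↿(pdx φ)) p + (↿ψ) p := rfl
    rw [h]; exact (contDiff_pdx hφ).add hψ
  have hFx : Continuous (fun x => pdx F t x) := continuous_section (contDiff_pdx hFsm) t
  have hFt : Continuous (F t) := continuous_section hFsm t
  -- named quantities
  set P := ∫ x in (0:ℝ)..L, (pdx φ t x) ^ 2 with hP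
  set Q := ∫ x in (0:ℝ)..L, (pdx ψ t x) ^ 2 with hQ
  set R := ∫ x in (0:ℝ)..L, (pdt φ t x) ^ 2 with hR
  set Sv := ∫ x in (0:ℝ)..L, pdx φ t x * ψ t x with hSv
  set U := ∫ x in (0:ℝ)..L, pdt φ t x * φ t x with hU
  set V := ∫ x in (0:ℝ)..L, (φ t x) ^ 2 with hV
  set W := ∫ x in (0:ℝ)..L, (ψ t x) ^ 2 with hW
  -- derivative of I₂
  have hg : ContDiff ℝ (⊤ : ℕ∞) ↿(fun s x => pdt φ s x * φ s x) := (contDiff_pdt hφ).mul hφ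
  have hI2fun : I₂ = fun s => ρ₁ * ∫ x in (0:ℝ)..L, pdt φ s x * φ s x := funext hI₂
  have hD : HasDerivAt I₂
      (ρ₁ * ∫ x in (0:ℝ)..L, pdt (fun s x => pdt φ s x * φ s x) t x) t := by
    rw [hI2fun]
    exact (hasDerivAt_intervalIntegral hg 0 L t).const_mul ρ₁
  have hderiv : deriv I₂ t
      = ρ₁ * ∫ x in (0:ℝ)..L, pdt (fun s x => pdt φ s x * φ s x) t x := hD.deriv
  -- the time derivative of the integrand
  have hpdt_g : ∀ x, pdt (fun s x => pdt φ s x * φ s x) t x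
      = pdt (pdt φ) t x * φ t x + pdt φ t x * pdt φ t x := fun x =>
    ((hasDerivAt_pdt (contDiff_pdt hφ) t x).mul (hasDerivAt_pdt hφ t x)).deriv
  have hsplit : ∫ x in (0:ℝ)..L, pdt (fun s x => pdt φ s x * φ s x) t x
      = (∫ x in (0:ℝ)..L, pdt (pdt φ) t x * φ t x) + R := by
    rw [intervalIntegral.integral_congr (g := fun x =>
      pdt (pdt φ) t x * φ t x + pdt φ t x * pdt φ t x) (fun x _ => hpdt_g x)]
    rw [intervalIntegral.integral_add (f := fun x => pdt (pdt φ) t x * φ t x) (g := fun x => pdt φ t x * pdt φ t x) ((hφtt.mul hφt).intervalIntegrable 0 L)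
      ((hφtd.mul hφtd).intervalIntegrable 0 L)]
    congr 1
    rw [hR]
    apply intervalIntegral.integral_congr
    intro x _
    simp only [pow_two]
  -- substitute the PDE
  have h2 : ρ₁ * ∫ x in (0:ℝ)..L, pdt (pdt φ) t x * φ t x
      = ∫ x in (0:ℝ)..L, (k * pdx F t x - μ * pdt φ t x) * φ t x := by
    rw [← intervalIntegral.integral_const_mul]
    apply intervalIntegral.integral_congr
    intro x hx
    rw [Set.uIcc_of_le hL.le] at hx
    have hpde := heq t ht x hx
    dsimp only
    linear_combination φ t x * hpde
  have h3 : ∫ x in (0:ℝ)..L, (k * pdx F t x - μ * pdt φ t x) * φ t x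
      = k * (∫ x in (0:ℝ)..L, pdx F t x * φ t x) - μ * U := by
    have hfe : (fun x => (k * pdx F t x - μ * pdt φ t x) * φ t x)
        = fun x => k * (pdx F t x * φ t x) - μ * (pdt φ t x * φ t x) := by
      funext x; ring
    rw [hfe, intervalIntegral.integral_sub (f := fun x => k * (pdx F t x * φ t x)) (g := fun x => μ * (pdt φ t x * φ t x))
      ((continuous_const.mul (hFx.mul hφt)).intervalIntegrable 0 L)
      ((continuous_const.mul (hφtd.mul hφt)).intervalIntegrable 0 L),
      intervalIntegral.integral_const_mul, intervalIntegral.integral_const_mul, hU]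
  -- integration by parts
  have h4 : ∫ x in (0:ℝ)..L, pdx F t x * φ t x = -(P + Sv) := by
    have hparts := intervalIntegral.integral_mul_deriv_eq_deriv_mul
      (u := F t) (v := φ t) (u' := fun x => pdx F t x) (v' := fun x => pdx φ t x)
      (fun x _ => hasDerivAt_pdx hFsm t x) (fun x _ => hasDerivAt_pdx hφ t x)
      (hFx.intervalIntegrable 0 L) (hφx.intervalIntegrable 0 L)
    rw [hb0, hbL] at hparts
    have h5 : ∫ x in (0:ℝ)..L, F t x * pdx φ t x = P + Sv := by
      have hfe : (fun x => F t x * pdx φ t x)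
          = fun x => (pdx φ t x) ^ 2 + pdx φ t x * ψ t x := by
        funext x; simp only [hF]; ring
      rw [hfe, intervalIntegral.integral_add (f := fun x => (pdx φ t x) ^ 2) (g := fun x => pdx φ t x * ψ t x) ((hφx.pow 2).intervalIntegrable 0 L)
        ((hφx.mul hψt).intervalIntegrable 0 L), hP, hSv]
    rw [h5] at hparts
    linarith [hparts]
  -- the derivative formula
  have E1 : deriv I₂ t = -(k * P) - k * Sv - μ * U + ρ₁ * R := by
    calc deriv I₂ t
        = ρ₁ * ∫ x in (0:ℝ)..L, pdt (fun s x => pdt φ s x * φ s x) t x := hderiv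
      _ = ρ₁ * ((∫ x in (0:ℝ)..L, pdt (pdt φ) t x * φ t x) + R) := by rw [hsplit]
      _ = ρ₁ * (∫ x in (0:ℝ)..L, pdt (pdt φ) t x * φ t x) + ρ₁ * R := by ring
      _ = (k * (∫ x in (0:ℝ)..L, pdx F t x * φ t x) - μ * U) + ρ₁ * R := by
            rw [h2, h3]
      _ = (k * (-(P + Sv)) - μ * U) + ρ₁ * R := by rw [h4]
      _ = -(k * P) - k * Sv - μ * U + ρ₁ * R := by ring
  -- Poincaré inequalities
  have hPψ : W ≤ c * Q := by
    rw [hW, hQ, hc]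
    exact poincare_sharp hL (hasDerivAt_pdx hψ t) hψx hp0 hpL
  have hPφ : V ≤ c * P := by
    rw [hV, hP, hc]
    exact poincare_sharp hL (hasDerivAt_pdx hφ t) hφx hb0 hbL
  -- Young inequalities
  have B1 : -Sv ≤ ε * c / 2 * P + 1 / (2 * ε) * Q := by
    have Y1 := young_int (q := fun x => -ψ t x) hL.le (mul_pos hε hc0) hφx hψt.neg
    have hLHS : (∫ x in (0:ℝ)..L, pdx φ t x * (-ψ t x)) = -Sv := by
      have hfe : (fun x => pdx φ t x * (-ψ t x))
          = fun x => -(pdx φ t x * ψ t x) := by funext x; ring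
      rw [hfe, intervalIntegral.integral_neg, hSv]
    have hq2 : (∫ x in (0:ℝ)..L, (-ψ t x) ^ 2) = W := by
      have hfe : (fun x => (-ψ t x) ^ 2) = fun x => (ψ t x) ^ 2 := by funext x; ring
      rw [hfe, hW]
    rw [hLHS, hq2, ← hP] at Y1
    have h1 : 1 / (2 * (ε * c)) * W ≤ 1 / (2 * (ε * c)) * (c * Q) :=
      mul_le_mul_of_nonneg_left hPψ (by positivity)
    have h2' : 1 / (2 * (ε * c)) * (c * Q) = 1 / (2 * ε) * Q := by
      field_simp
    linarith [Y1, h1, h2']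
  have B2 : -U ≤ ε * c / 2 * P + 1 / (2 * ε) * R := by
    have Y2 := young_int (p := fun x => -φ t x) hL.le hε hφt.neg hφtd
    have hLHS : (∫ x in (0:ℝ)..L, (-φ t x) * pdt φ t x) = -U := by
      have hfe : (fun x => (-φ t x) * pdt φ t x)
          = fun x => -(pdt φ t x * φ t x) := by funext x; ring
      rw [hfe, intervalIntegral.integral_neg, hU]
    have hp2 : (∫ x in (0:ℝ)..L, (-φ t x) ^ 2) = V := by
      have hfe : (fun x => (-φ t x) ^ 2) = fun x => (φ t x) ^ 2 := by funext x; ring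
      rw [hfe, hV]
    rw [hLHS, hp2, ← hR] at Y2
    have h1 : ε / 2 * V ≤ ε / 2 * (c * P) :=
      mul_le_mul_of_nonneg_left hPφ (by positivity)
    linarith [Y2, h1]
  rw [E1]
  have hB1k := mul_le_mul_of_nonneg_left B1 hk.le
  have hB2μ := mul_le_mul_of_nonneg_left B2 hμ.le
  have hgoal : -(k - ε * c / 2 * (k + μ)) * P + k / (2 * ε) * Q + (μ / (2 * ε) + ρ₁) * R
      = -(k * P) + k * (ε * c / 2 * P + 1 / (2 * ε) * Q)
        + μ * (ε * c / 2 * P + 1 / (2 * ε) * R) + ρ₁ * R := by ring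
  rw [hgoal]
  linarith [hB1k, hB2μ]
end
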